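/- The optimal cost of the minimum-energy double integrator problem with x(0) = (-1,0), x(1) = (0,0) equals 6. -/

import Mathlib

/-!
The optimal control is the Pontryagin multiplier `p t = 6 - 12 t`. Integrating by parts twice
against the affine weight `p` shows `∫ p u = 12` for every feasible control `u`, so completing
the square gives `∫ u² ≥ 2 ∫ p u - ∫ p² = 24 - 12 = 12`, with equality exactly at `u = p`.
-/

open intervalIntegral Set

/-- A continuous control `u` is feasible for the double integrator on `[0,1]`
with `x(0) = (-1,0)`, `x(1) = (0,0)`. -/
def DIFeasible (u : ℝ → ℝ) : Prop :=
  ∃ x1 x2 : ℝ → ℝ,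
    (∀ t ∈ Set.Icc (0:ℝ) 1, HasDerivAt x1 (x2 t) t ∧ HasDerivAt x2 (u t) t) ∧
    x1 0 = -1 ∧ x2 0 = 0 ∧ x1 1 = 0 ∧ x2 1 = 0

theorem integral_affine_mul_second_deriv_eq {a b c d : ℝ} {x₁ x₂ u : ℝ → ℝ}
    (hx₁ : ∀ t ∈ uIcc a b, HasDerivAt x₁ (x₂ t) t) (hx₂ : ∀ t ∈ uIcc a b, HasDerivAt x₂ (u t) t)
    (hu : IntervalIntegrable u MeasureTheory.volume a b) :
    ∫ t in a..b, (c - d * t) * u t =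
      (c - d * b) * x₂ b - (c - d * a) * x₂ a + d * (x₁ b - x₁ a) := by
  have hx₂_int : IntervalIntegrable x₂ MeasureTheory.volume a b :=
    ContinuousOn.intervalIntegrable fun t ht => (hx₂ t ht).continuousAt.continuousWithinAt
  have hweight : ∀ t ∈ uIcc a b, HasDerivAt (fun s => c - d * s) (-d) t := fun t _ =>
    (((hasDerivAt_id t).const_mul d).const_sub c).congr_deriv (by simp)
  rw [integral_mul_deriv_eq_deriv_mul hweight hx₂ intervalIntegrable_const hu,
    integral_const_mul, integral_eq_sub_of_hasDerivAt hx₁ hx₂_int]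
  ring

theorem two_mul_integral_mul_sub_integral_sq_le {a b : ℝ} (hab : a ≤ b) {p u : ℝ → ℝ}
    (hp : Continuous p) (hu : Continuous u) :
    2 * (∫ t in a..b, p t * u t) - ∫ t in a..b, p t ^ 2 ≤ ∫ t in a..b, u t ^ 2 := by
  have hexpand : ∫ t in a..b, (u t - p t) ^ 2 =
      (∫ t in a..b, u t ^ 2) - 2 * (∫ t in a..b, p t * u t) + ∫ t in a..b, p t ^ 2 := by
    rw [← integral_const_mul, ← integral_sub, ← integral_add]
    · exact integral_congr fun t _ => by ring
    all_goals exact (by fun_prop : Continuous _).intervalIntegrable a b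
  have hsq : 0 ≤ ∫ t in a..b, (u t - p t) ^ 2 := integral_nonneg hab fun t _ => sq_nonneg _
  linarith

theorem integral_six_sub_twelve_mul_sq : ∫ t in (0:ℝ)..1, (6 - 12 * t) ^ 2 = 12 := by
  simp [integral_comp_sub_mul (fun x => x ^ 2)]
  norm_num

theorem diFeasible_six_sub_twelve_mul : DIFeasible fun t => 6 - 12 * t := by
  refine ⟨fun t => -1 + 3 * t ^ 2 - 2 * t ^ 3, fun t => 6 * t - 6 * t ^ 2, fun t _ => ⟨?_, ?_⟩,
    by norm_num, by norm_num, by norm_num, by norm_num⟩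
  · exact (((hasDerivAt_pow 2 t).const_mul 3).const_add (-1) |>.sub
      ((hasDerivAt_pow 3 t).const_mul 2)).congr_deriv (by push_cast; ring)
  · exact (((hasDerivAt_id t).const_mul 6).sub
      ((hasDerivAt_pow 2 t).const_mul 6)).congr_deriv (by push_cast; ring)

theorem DIFeasible.integral_six_sub_twelve_mul_mul {u : ℝ → ℝ} (h : DIFeasible u)
    (hu : Continuous u) : ∫ t in (0:ℝ)..1, (6 - 12 * t) * u t = 12 := by
  obtain ⟨x₁, x₂, hderiv, hx₁0, hx₂0, hx₁1, hx₂1⟩ := h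
  rw [← uIcc_of_le zero_le_one] at hderiv
  rw [integral_affine_mul_second_deriv_eq (fun t ht => (hderiv t ht).1)
    (fun t ht => (hderiv t ht).2) (hu.intervalIntegrable 0 1), hx₁0, hx₂0, hx₁1, hx₂1]
  norm_num

theorem DIFeasible.twelve_le_integral_sq {u : ℝ → ℝ} (h : DIFeasible u) (hu : Continuous u) :
    12 ≤ ∫ t in (0:ℝ)..1, u t ^ 2 := by
  have := two_mul_integral_mul_sub_integral_sq_le zero_le_one
    (by fun_prop : Continuous fun t : ℝ => 6 - 12 * t) hu
  rw [h.integral_six_sub_twelve_mul_mul hu, integral_six_sub_twelve_mul_sq] at this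
  linarith

/-- The optimal cost of the minimum-energy double integrator problem is `6`,
attained by `u(t) = 6 - 12 t`. -/
theorem double_integrator_optimal_cost :
    ((1/2) * (∫ t in (0:ℝ)..1, (6 - 12 * t)^2) = 6 ∧ DIFeasible (fun t => 6 - 12 * t)) ∧
    IsLeast {c : ℝ | ∃ u : ℝ → ℝ, Continuous u ∧ DIFeasible u ∧
      c = (1/2) * ∫ t in (0:ℝ)..1, (u t)^2} 6 := by
  have hcost : (1/2) * (∫ t in (0:ℝ)..1, (6 - 12 * t)^2) = 6 := by
    rw [integral_six_sub_twelve_mul_sq]; norm_num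
  refine ⟨⟨hcost, diFeasible_six_sub_twelve_mul⟩,
    ⟨fun t => 6 - 12 * t, by fun_prop, diFeasible_six_sub_twelve_mul, hcost.symm⟩, ?_⟩
  rintro c ⟨u, hu, hfeas, rfl⟩
  linarith [hfeas.twelve_le_integral_sq hu]
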